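/- For Schwartz functions f, g on ℝ^d and skew-symmetric θ, ∫_{ℝ^d} (f ⋆_θ g)(x) dx = ∫_{ℝ^d} f(x) g(x) dx. -/

import Mathlib

open MeasureTheory Matrix

/-- The Moyal product associated to a skew-symmetric matrix θ:
(f ⋆_θ g)(x) = (2π)^{−d} ∫∫ f(x + (θ/2)v) g(x − w) e^{i v·w} dv dw. -/
noncomputable def moyalProd {d : ℕ} (θ : Matrix (Fin d) (Fin d) ℝ)
    (f g : (Fin d → ℝ) → ℂ) : (Fin d → ℝ) → ℂ :=
  fun x => ((2 * Real.pi) ^ d : ℝ)⁻¹ •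
    ∫ v : Fin d → ℝ, ∫ w : Fin d → ℝ,
      f (x + (1 / 2 : ℝ) • θ.mulVec v) * g (x - w)
        * Complex.exp (Complex.I * (∑ i, v i * w i : ℝ))

/-!
Substituting `v = 2πξ` absorbs the factor `(2π)^{-d}` and turns the phase into `𝐞 ⟪ξ, w⟫`.
The `w`-integral is then `𝐞 ⟪ξ, x⟫ 𝓕 g(ξ)`. After exchanging the `x`- and `ξ`-integrals, the
`x`-integral of `f (x + A ξ) 𝐞 ⟪ξ, x⟫` is `𝓕⁻ f(ξ)`, because `⟪ξ, A ξ⟫ = 0` for the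
skew-symmetric `A = π θ`; Parseval's identity `∫ 𝓕⁻ f · 𝓕 g = ∫ f g` concludes.
-/

theorem Matrix.dotProduct_mulVec_self_eq_zero_of_transpose_eq_neg {R n : Type*} [CommRing R]
    [IsAddTorsionFree R] [Fintype n] {A : Matrix n n R} (hA : Aᵀ = -A) (v : n → R) :
    v ⬝ᵥ A *ᵥ v = 0 := by
  refine self_eq_neg.mp ?_
  calc v ⬝ᵥ A *ᵥ v = Aᵀ *ᵥ v ⬝ᵥ v := by rw [mulVec_transpose, dotProduct_mulVec]
    _ = -(v ⬝ᵥ A *ᵥ v) := by rw [hA, neg_mulVec, neg_dotProduct, dotProduct_comm]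

open Real
open scoped FourierTransform RealInnerProductSpace

section TwistedProduct

variable {V : Type*} [NormedAddCommGroup V] [InnerProductSpace ℝ V] [FiniteDimensional ℝ V]
  [MeasurableSpace V] [BorelSpace V]

/-- `moyalProd θ` in the variable `v = 2π ξ`, with `A = π θ`. -/
noncomputable def twistedProduct (A : V → V) (f g : V → ℂ) (x : V) : ℂ :=
  ∫ ξ, ∫ w, f (x + A ξ) * g (x - w) * 𝐞 ⟪ξ, w⟫

theorem integral_comp_sub_mul_fourierChar (g : V → ℂ) (x ξ : V) :
    ∫ w, g (x - w) * 𝐞 ⟪ξ, w⟫ = 𝐞 ⟪ξ, x⟫ * 𝓕 g ξ := by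
  rw [← integral_sub_left_eq_self _ volume x, Real.fourier_eq, ← integral_const_mul]
  congr 1 with w
  rw [sub_sub_cancel, inner_sub_right, ← real_inner_comm ξ w, sub_eq_add_neg,
    AddChar.map_add_eq_mul, Circle.coe_mul, Circle.smul_def, smul_eq_mul]
  ring

theorem integral_comp_add_mul_fourierChar (f : V → ℂ) {y ξ : V} (h : ⟪ξ, y⟫ = 0) :
    ∫ x, f (x + y) * 𝐞 ⟪ξ, x⟫ = 𝓕⁻ f ξ := by
  calc ∫ x, f (x + y) * 𝐞 ⟪ξ, x⟫ = ∫ x, (fun z => 𝐞 ⟪z, ξ⟫ • f z) (x + y) := by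
        congr 1 with x
        beta_reduce
        rw [inner_add_left, real_inner_comm ξ y, h, add_zero, Circle.smul_def, smul_eq_mul,
          mul_comm, real_inner_comm]
    _ = 𝓕⁻ f ξ := (integral_add_right_eq_self _ y).trans (Real.fourierInv_eq f ξ).symm

theorem integrable_comp_add_mul_fourierChar_mul (A : V →L[ℝ] V) {f G : V → ℂ}
    (hf : Integrable f) (hfc : Continuous f) (hG : Integrable G) (hGc : Continuous G) :
    Integrable (fun p : V × V => f (p.1 + A p.2) * 𝐞 ⟪p.2, p.1⟫ * G p.2) (volume.prod volume) := by
  have hc : Continuous fun p : V × V => f (p.1 + A p.2) * 𝐞 ⟪p.2, p.1⟫ * G p.2 := by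
    have := Real.continuous_fourierChar
    fun_prop
  have hnorm (x ξ : V) : ‖f (x + A ξ) * 𝐞 ⟪ξ, x⟫ * G ξ‖ = ‖f (x + A ξ)‖ * ‖G ξ‖ := by
    rw [norm_mul, norm_mul, Circle.norm_coe, mul_one]
  rw [integrable_prod_iff' hc.aestronglyMeasurable]
  refine ⟨.of_forall fun ξ => ?_, ?_⟩
  · refine ((hf.comp_add_right (A ξ)).norm.mul_const ‖G ξ‖).mono' (by fun_prop) ?_
    exact .of_forall fun x => (hnorm x ξ).le
  · simp_rw [hnorm, integral_mul_const, integral_add_right_eq_self (fun x => ‖f x‖)]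
    exact hG.norm.const_mul _

theorem SchwartzMap.integral_fourierInv_mul_fourier (f g : SchwartzMap V ℂ) :
    ∫ ξ, 𝓕⁻ ⇑f ξ * 𝓕 ⇑g ξ = ∫ x, f x * g x := by
  rw [← SchwartzMap.fourierInv_coe, ← SchwartzMap.fourier_coe, integral_fourierInv_mul_eq,
    FourierTransform.fourierInv_fourier_eq]

theorem integral_twistedProduct (A : V →L[ℝ] V) (hA : ∀ ξ, ⟪ξ, A ξ⟫ = 0)
    (f g : SchwartzMap V ℂ) : ∫ x, twistedProduct A f g x = ∫ x, f x * g x := by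
  have hint := integrable_comp_add_mul_fourierChar_mul A f.integrable f.continuous
    (𝓕 g).integrable (𝓕 g).continuous
  rw [SchwartzMap.fourier_coe] at hint
  calc ∫ x, twistedProduct A f g x = ∫ x, ∫ ξ, f (x + A ξ) * 𝐞 ⟪ξ, x⟫ * 𝓕 ⇑g ξ := by
        simp_rw [twistedProduct, mul_assoc, integral_const_mul, integral_comp_sub_mul_fourierChar]
    _ = ∫ ξ, ∫ x, f (x + A ξ) * 𝐞 ⟪ξ, x⟫ * 𝓕 ⇑g ξ := integral_integral_swap hint
    _ = ∫ ξ, 𝓕⁻ ⇑f ξ * 𝓕 ⇑g ξ := by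
        simp_rw [integral_mul_const, integral_comp_add_mul_fourierChar _ (hA _)]
    _ = ∫ x, f x * g x := SchwartzMap.integral_fourierInv_mul_fourier f g

end TwistedProduct

theorem EuclideanSpace.integral_comp_ofLp {ι E : Type*} [Fintype ι] [NormedAddCommGroup E]
    [NormedSpace ℝ E] (F : (ι → ℝ) → E) :
    ∫ x : EuclideanSpace ℝ ι, F (WithLp.ofLp x) = ∫ x, F x :=
  (PiLp.volume_preserving_ofLp ι).integral_comp
    (MeasurableEquiv.toLp 2 (ι → ℝ)).symm.measurableEmbedding F

theorem moyalProd_ofLp {d : ℕ} (θ : Matrix (Fin d) (Fin d) ℝ) (f g : (Fin d → ℝ) → ℂ)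
    (x : EuclideanSpace ℝ (Fin d)) :
    moyalProd θ f g (WithLp.ofLp x) =
      twistedProduct (π • toEuclideanCLM (𝕜 := ℝ) θ) (f ∘ WithLp.ofLp) (g ∘ WithLp.ofLp) x := by
  have hscale := Measure.integral_comp_smul_of_nonneg (μ := volume) (hR := by positivity)
    (fun v : EuclideanSpace ℝ (Fin d) => ∫ w : EuclideanSpace ℝ (Fin d),
      f (WithLp.ofLp x + (1 / 2 : ℝ) • θ *ᵥ WithLp.ofLp v) * g (WithLp.ofLp x - WithLp.ofLp w)
        * Complex.exp (Complex.I * (∑ i, v i * w i : ℝ))) (2 * π)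
  rw [finrank_euclideanSpace_fin] at hscale
  simp only [moyalProd, twistedProduct, ← EuclideanSpace.integral_comp_ofLp]
  rw [← hscale]
  congr 1 with ξ
  congr 1 with w
  have hshift : WithLp.ofLp x + (1 / 2 : ℝ) • θ *ᵥ WithLp.ofLp ((2 * π) • ξ) =
      WithLp.ofLp (x + (π • toEuclideanCLM (𝕜 := ℝ) θ) ξ) := by
    simp only [WithLp.ofLp_add, WithLp.ofLp_smul, _root_.smul_apply, ofLp_toEuclideanCLM,
      mulVec_smul, smul_smul]
    norm_num [← mul_assoc]
  have hphase : ∑ i, ((2 * π) • ξ) i * w i = 2 * π * ⟪ξ, w⟫ := by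
    rw [PiLp.inner_apply, Finset.mul_sum]
    refine Finset.sum_congr rfl fun i _ => ?_
    simp only [PiLp.smul_apply, smul_eq_mul, RCLike.inner_apply, conj_trivial]
    ring
  rw [hshift, hphase, Real.fourierChar_apply, mul_comm Complex.I]
  rfl

/-- Tracial property of the Moyal product: ∫ (f ⋆_θ g) = ∫ f g. -/
theorem moyal_integral_eq {d : ℕ} (θ : Matrix (Fin d) (Fin d) ℝ)
    (hθ : θᵀ = -θ) (f g : SchwartzMap (Fin d → ℝ) ℂ) :
    ∫ x : Fin d → ℝ, moyalProd θ (fun y => f y) (fun y => g y) x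
      = ∫ x : Fin d → ℝ, f x * g x := by
  have hskew (ξ : EuclideanSpace ℝ (Fin d)) : ⟪ξ, (π • toEuclideanCLM (𝕜 := ℝ) θ) ξ⟫ = 0 := by
    rw [_root_.smul_apply, real_inner_smul_right, inner_toEuclideanCLM,
      dotProduct_mulVec_self_eq_zero_of_transpose_eq_neg hθ, mul_zero]
  let toEuclidean : SchwartzMap (Fin d → ℝ) ℂ →L[ℂ] SchwartzMap (EuclideanSpace ℝ (Fin d)) ℂ :=
    SchwartzMap.compCLMOfContinuousLinearEquiv ℂ (EuclideanSpace.equiv (Fin d) ℝ)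
  have key := integral_twistedProduct _ hskew (toEuclidean f) (toEuclidean g)
  rw [← EuclideanSpace.integral_comp_ofLp,
    ← EuclideanSpace.integral_comp_ofLp (fun x => f x * g x)]
  simp_rw [moyalProd_ofLp]
  exact key
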